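/- arXiv:1309.3701 — 6 statements merged into one kernel-verified Lean document; each statement's English description precedes it below -/
import Mathlib

section
/- A pair (m,w) not in a matching M of a bipartite graph with strict preferences blocks M if and only if mw dominates M at both endpoints, i.e., m is unmatched or prefers w to its M-partner, and w is unmatched or prefers m to its M-partner. A matching M is stable iff no edge satisfies this blocking property. Theorem: for every bipartite stable-marriage instance with strict (possibly incomplete) preference lists, a stable matching exists. -/
/-- A (bipartite) stable marriage instance: men `U`, women `W`, an adjacency
relation (acceptable pairs), and rank functions (lower rank = more preferred). -/
structure SM (U W : Type) where
  adj : U → W → Prop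
  rU : U → W → ℚ
  rW : W → U → ℚ

/-- `M` is a matching: contained in the edge set, each vertex has at most one partner. -/
def IsMatching {U W : Type} (I : SM U W) (M : U → W → Prop) : Prop :=
  (∀ m w, M m w → I.adj m w) ∧
  (∀ m w w', M m w → M m w' → w = w') ∧
  (∀ m m' w, M m w → M m' w → m = m')

/-- The edge `mw` blocks `M`: it is an edge outside `M` dominating `M` at both
endpoints (each endpoint unmatched or strictly preferring the other). -/
def Blocks {U W : Type} (I : SM U W) (M : U → W → Prop) (m : U) (w : W) : Prop :=
  I.adj m w ∧ ¬ M m w ∧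
  ((∀ w', ¬ M m w') ∨ (∃ w', M m w' ∧ I.rU m w < I.rU m w')) ∧
  ((∀ m', ¬ M m' w) ∨ (∃ m', M m' w ∧ I.rW w m < I.rW w m'))

/-- A matching is stable iff no edge blocks it. -/
def IsStable {U W : Type} (I : SM U W) (M : U → W → Prop) : Prop :=
  IsMatching I M ∧ ∀ m w, ¬ Blocks I M m w

/-- Preferences are strict (injective ranks) on each vertex's list of neighbours. -/
def StrictPrefs {U W : Type} (I : SM U W) : Prop :=
  (∀ m w w', I.adj m w → I.adj m w' → I.rU m w = I.rU m w' → w = w') ∧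
  (∀ w m m', I.adj m w → I.adj m' w → I.rW w m = I.rW w m' → m = m')

/-!
Fleiner's fixed-point form of Gale–Shapley. For a set `X` of edges, the edges of `X` that are not
their man's favourite within `X` are the proposals he withdraws; for a set `Y`, the edges of `Y`
that are not their woman's favourite within `Y` are the ones she rejects. Both operations are
monotone, so `X ↦ E \ rejected (E \ withdrawn X)` is monotone and has a fixed point `X` by
Knaster–Tarski. With `Y = E \ withdrawn X`, the set `X ∩ Y` consists exactly of the men's
favourites in `X` and exactly of the women's favourites in `Y`, so strict preferences make it a
matching. An edge outside `X` was rejected by its woman in favour of her partner, and an edge of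
`X` outside the matching is beaten by its man's partner, so no edge blocks.
-/

section BestPerKey

variable {α β γ : Type*} [LinearOrder γ] (key : α → β) (rank : α → γ)

def bestPerKey (X : Set α) : Set α :=
  {p | p ∈ X ∧ ∀ q ∈ X, key q = key p → rank p ≤ rank q}

variable {key rank}

lemma bestPerKey_subset (X : Set α) : bestPerKey key rank X ⊆ X := fun _ hp => hp.1

lemma monotone_sdiff_bestPerKey : Monotone fun X : Set α => X \ bestPerKey key rank X := by
  rintro X X' hXX' p ⟨hpX, hp⟩
  exact ⟨hXX' hpX, fun hp' => hp ⟨hpX, fun q hq hkey => hp'.2 q (hXX' hq) hkey⟩⟩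

lemma eq_of_mem_bestPerKey {X : Set α}
    (hinj : ∀ p ∈ X, ∀ q ∈ X, key p = key q → rank p = rank q → p = q)
    {p q : α} (hp : p ∈ bestPerKey key rank X) (hq : q ∈ bestPerKey key rank X)
    (hkey : key p = key q) : p = q :=
  hinj p hp.1 q hq.1 hkey ((hp.2 q hq.1 hkey.symm).antisymm (hq.2 p hp.1 hkey))

lemma exists_mem_bestPerKey_lt {X : Set α} {p : α} (hfin : {q | q ∈ X ∧ key q = key p}.Finite)
    (hp : p ∈ X \ bestPerKey key rank X) :
    ∃ q ∈ bestPerKey key rank X, key q = key p ∧ rank q < rank p := by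
  obtain ⟨q₀, hq₀X, hq₀key, hq₀lt⟩ : ∃ q ∈ X, key q = key p ∧ rank q < rank p := by
    by_contra! h
    exact hp.2 ⟨hp.1, h⟩
  obtain ⟨q, ⟨hqX, hqkey⟩, hqmin⟩ :=
    Set.exists_min_image {q | q ∈ X ∧ key q = key p} rank hfin ⟨q₀, hq₀X, hq₀key⟩
  refine ⟨q, ⟨hqX, fun r hrX hrkey => hqmin r ⟨hrX, hrkey.trans hqkey⟩⟩, hqkey, ?_⟩
  exact (hqmin q₀ ⟨hq₀X, hq₀key⟩).trans_lt hq₀lt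

end BestPerKey

lemma Set.inter_sdiff_sdiff_eq {α : Type*} {E X C : Set α} (hCX : C ⊆ X) (hXE : X ⊆ E) :
    X ∩ (E \ (X \ C)) = C := by
  ext p
  constructor
  · rintro ⟨hpX, -, hp⟩
    by_contra hpC
    exact hp ⟨hpX, hpC⟩
  · intro hpC
    exact ⟨hCX hpC, hXE (hCX hpC), fun hp => hp.2 hpC⟩

namespace SM

variable {U W : Type} (I : SM U W)

def edges : Set (U × W) := {p | I.adj p.1 p.2}

def menBest (X : Set (U × W)) : Set (U × W) := bestPerKey Prod.fst (fun p => I.rU p.1 p.2) X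

def womenBest (Y : Set (U × W)) : Set (U × W) := bestPerKey Prod.snd (fun p => I.rW p.2 p.1) Y

theorem exists_fixedPoint :
    ∃ X Y : Set (U × W), X = I.edges \ (Y \ I.womenBest Y) ∧ Y = I.edges \ (X \ I.menBest X) := by
  let withdrawn X := X \ I.menBest X
  let rejected Y := Y \ I.womenBest Y
  let Φ : Set (U × W) →o Set (U × W) :=
    ⟨fun X => I.edges \ rejected (I.edges \ withdrawn X),
      fun _ _ h => sdiff_le_sdiff_left <| monotone_sdiff_bestPerKey <| sdiff_le_sdiff_left <|
        monotone_sdiff_bestPerKey h⟩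
  exact ⟨Φ.lfp, _, Φ.map_lfp.symm, rfl⟩

variable {I}

lemma eq_of_mem_menBest (hstrict : StrictPrefs I) {X : Set (U × W)} (hXE : X ⊆ I.edges)
    {m : U} {w w' : W} (h : (m, w) ∈ I.menBest X) (h' : (m, w') ∈ I.menBest X) : w = w' := by
  refine (Prod.ext_iff.1 <| eq_of_mem_bestPerKey ?_ h h' rfl).2
  rintro ⟨m, w⟩ hp ⟨m', w'⟩ hq (rfl : m = m') hrank
  rw [hstrict.1 m w w' (hXE hp) (hXE hq) hrank]

lemma eq_of_mem_womenBest (hstrict : StrictPrefs I) {Y : Set (U × W)} (hYE : Y ⊆ I.edges)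
    {m m' : U} {w : W} (h : (m, w) ∈ I.womenBest Y) (h' : (m', w) ∈ I.womenBest Y) : m = m' := by
  refine (Prod.ext_iff.1 <| eq_of_mem_bestPerKey ?_ h h' rfl).1
  rintro ⟨m, w⟩ hp ⟨m', w'⟩ hq (rfl : w = w') hrank
  rw [hstrict.2 w m m' (hYE hp) (hYE hq) hrank]

lemma not_dominates_at_man [Finite W] {X : Set (U × W)} {m : U} {w : W}
    (hmw : (m, w) ∈ X \ I.menBest X) :
    ¬ ((∀ w', (m, w') ∉ I.menBest X) ∨ ∃ w', (m, w') ∈ I.menBest X ∧ I.rU m w < I.rU m w') := by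
  rintro (hfree | ⟨w', hw', hlt⟩)
  · have hfin : {q | q ∈ X ∧ q.1 = m}.Finite :=
      ((Set.finite_singleton m).prod Set.finite_univ).subset fun q hq => ⟨hq.2, trivial⟩
    obtain ⟨⟨m', w'⟩, hbest, rfl : m' = m, -⟩ := exists_mem_bestPerKey_lt hfin hmw
    exact hfree w' hbest
  · exact (hw'.2 _ hmw.1 rfl).not_gt hlt

lemma not_dominates_at_woman [Finite U] {Y : Set (U × W)} {m : U} {w : W}
    (hmw : (m, w) ∈ Y \ I.womenBest Y) :
    ¬ ((∀ m', (m', w) ∉ I.womenBest Y) ∨ ∃ m', (m', w) ∈ I.womenBest Y ∧ I.rW w m < I.rW w m') := by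
  rintro (hfree | ⟨m', hm', hlt⟩)
  · have hfin : {q | q ∈ Y ∧ q.2 = w}.Finite :=
      (Set.finite_univ.prod (Set.finite_singleton w)).subset fun q hq => ⟨trivial, hq.2⟩
    obtain ⟨⟨m', w'⟩, hbest, rfl : w' = w, -⟩ := exists_mem_bestPerKey_lt hfin hmw
    exact hfree m' hbest
  · exact (hm'.2 _ hmw.1 rfl).not_gt hlt

end SM

/-- Gale–Shapley: every bipartite stable marriage instance with strict
(possibly incomplete) preference lists admits a stable matching. -/
theorem stable_matching_exists {U W : Type} [Finite U] [Finite W]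
    (I : SM U W) (hstrict : StrictPrefs I) :
    ∃ M : U → W → Prop, IsStable I M := by
  obtain ⟨X, Y, hX, hY⟩ := I.exists_fixedPoint
  have hXE : X ⊆ I.edges := hX ▸ Set.sdiff_subset
  have hYE : Y ⊆ I.edges := hY ▸ Set.sdiff_subset
  have hmen : X ∩ Y = I.menBest X := hY ▸ Set.inter_sdiff_sdiff_eq (bestPerKey_subset X) hXE
  have hwomen : X ∩ Y = I.womenBest Y := by
    rw [Set.inter_comm, hX]; exact Set.inter_sdiff_sdiff_eq (bestPerKey_subset Y) hYE
  refine ⟨fun m w => (m, w) ∈ X ∩ Y, ⟨fun m w h => hXE h.1, ?_, ?_⟩, ?_⟩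
  · intro m w w' h h'
    rw [hmen] at h h'
    exact SM.eq_of_mem_menBest hstrict hXE h h'
  · intro m m' w h h'
    rw [hwomen] at h h'
    exact SM.eq_of_mem_womenBest hstrict hYE h h'
  · rintro m w ⟨hadj, hnM, hm, hw⟩
    by_cases hmwX : (m, w) ∈ X
    · rw [hmen] at hnM hm
      exact SM.not_dominates_at_man ⟨hmwX, hnM⟩ hm
    · have hmwY : (m, w) ∈ Y \ I.womenBest Y := by
        by_contra h
        exact hmwX (hX ▸ ⟨hadj, h⟩)
      rw [hwomen] at hw
      exact SM.not_dominates_at_woman hmwY hw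
end

section
/- Let G be a stable-marriage instance and mw ∈ E a designated forced edge. Construct G' from G by deleting m and w's mutual edge mw, adding two new vertices w_s (adjacent only to m) and m_t (adjacent only to w), where edge m w_s occupies mw's position in m's preference list and edge m_t w occupies mw's position in w's preference list. Then G has a stable matching containing mw if and only if G' has a stable matching covering both w_s and m_t. -/
/-- The forced-edge construction `G'`: delete the edge `m₀w₀`, add a new woman
`w_s` adjacent only to `m₀` and a new man `m_t` adjacent only to `w₀`; the new
edges occupy exactly `m₀w₀`'s positions in `m₀`'s resp. `w₀`'s lists. -/
def forcedExt {U W : Type} (I : SM U W) (m0 : U) (w0 : W) :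
    SM (U ⊕ Unit) (W ⊕ Unit) where
  adj x y :=
    match x, y with
    | Sum.inl u, Sum.inl w => I.adj u w ∧ ¬ (u = m0 ∧ w = w0)
    | Sum.inl u, Sum.inr _ => u = m0
    | Sum.inr _, Sum.inl w => w = w0
    | Sum.inr _, Sum.inr _ => False
  rU x y :=
    match x, y with
    | Sum.inl u, Sum.inl w => I.rU u w
    | Sum.inl u, Sum.inr _ => I.rU u w0
    | Sum.inr _, _ => 0
  rW y x :=
    match y, x with
    | Sum.inl w, Sum.inl u => I.rW w u
    | Sum.inl w, Sum.inr _ => I.rW w m0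
    | Sum.inr _, _ => 0


/-!
Replacing the forced edge `m₀w₀` of a matching `M` by the two pendant edges `m₀w_s` and `m_tw₀`
gives a matching `M'` of `G'` (`splitForced`). Since `w_s` and `m_t` occupy `w₀`'s and `m₀`'s
positions, every original vertex keeps a partner of the same rank, so an original edge blocks `M'`
iff it blocks `M`, while the pendant edges lie in `M'` and cannot block. Conversely, a matching of
`G'` covering `w_s` and `m_t` must match them to `m₀` and `w₀`, so it is the split of its
restriction to `G` plus `m₀w₀` (`mergeForced`).
-/

def BeatsPartner {α : Type} (s : Set α) (rank : α → ℚ) (r : ℚ) : Prop :=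
  (∀ a, a ∉ s) ∨ ∃ a ∈ s, r < rank a

theorem beatsPartner_image {α β : Type} (e : α → β) (s : Set α) (rank : β → ℚ) (r : ℚ) :
    BeatsPartner (e '' s) rank r ↔ BeatsPartner s (rank ∘ e) r := by
  simp [BeatsPartner]

theorem blocks_iff {U W : Type} (I : SM U W) (M : U → W → Prop) (m : U) (w : W) :
    Blocks I M m w ↔ I.adj m w ∧ ¬ M m w ∧ BeatsPartner {w' | M m w'} (I.rU m) (I.rU m w) ∧
      BeatsPartner {m' | M m' w} (I.rW w) (I.rW w m) := Iff.rfl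

theorem isMatching_iff {U W : Type} (I : SM U W) (M : U → W → Prop) :
    IsMatching I M ↔ (∀ m w, M m w → I.adj m w) ∧ (∀ m, {w | M m w}.Subsingleton) ∧
      (∀ w, {m | M m w}.Subsingleton) :=
  ⟨fun ⟨h₁, h₂, h₃⟩ => ⟨h₁, fun m _ hw _ hw' => h₂ m _ _ hw hw', fun w _ hm _ hm' => h₃ _ _ w hm hm'⟩,
    fun ⟨h₁, h₂, h₃⟩ => ⟨h₁, fun m _ _ hw hw' => h₂ m hw hw', fun _ _ w hm hm' => h₃ w hm hm'⟩⟩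

namespace ForcedEdge

variable {U W : Type} (m0 : U) (w0 : W)

def splitForced (M : U → W → Prop) : U ⊕ Unit → W ⊕ Unit → Prop
  | .inl u, .inl w => M u w ∧ ¬(u = m0 ∧ w = w0)
  | .inl u, .inr _ => u = m0
  | .inr _, .inl w => w = w0
  | .inr _, .inr _ => False

def mergeForced (M' : U ⊕ Unit → W ⊕ Unit → Prop) (u : U) (w : W) : Prop :=
  M' (.inl u) (.inl w) ∨ (u = m0 ∧ w = w0)

open scoped Classical in
/-- The vertex of `G'` that takes the place of `w` in `u`'s list. -/
noncomputable def liftWoman (u : U) (w : W) : W ⊕ Unit :=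
  if u = m0 ∧ w = w0 then .inr () else .inl w

open scoped Classical in
noncomputable def liftMan (w : W) (u : U) : U ⊕ Unit :=
  if u = m0 ∧ w = w0 then .inr () else .inl u

variable {m0 w0}

theorem liftWoman_injective (u : U) : Function.Injective (liftWoman m0 w0 u) := by
  intro w w'
  unfold liftWoman
  split_ifs <;> grind

theorem liftMan_injective (w : W) : Function.Injective (liftMan m0 w0 w) := by
  intro u u'
  unfold liftMan
  split_ifs <;> grind

theorem rU_comp_liftWoman (I : SM U W) (u : U) :
    (forcedExt I m0 w0).rU (.inl u) ∘ liftWoman m0 w0 u = I.rU u := by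
  funext w
  rw [Function.comp_apply, liftWoman]
  split_ifs with h
  · obtain ⟨rfl, rfl⟩ := h; rfl
  · rfl

theorem rW_comp_liftMan (I : SM U W) (w : W) :
    (forcedExt I m0 w0).rW (.inl w) ∘ liftMan m0 w0 w = I.rW w := by
  funext u
  rw [Function.comp_apply, liftMan]
  split_ifs with h
  · obtain ⟨rfl, rfl⟩ := h; rfl
  · rfl

variable {I : SM U W} {M : U → W → Prop}

theorem partners_splitForced_inl_left (hM : M m0 w0) (u : U) :
    {y | splitForced m0 w0 M (.inl u) y} = liftWoman m0 w0 u '' {w | M u w} := by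
  ext (w | _) <;> simp only [Set.mem_ofPred_eq, Set.mem_image, splitForced, liftWoman] <;> grind

theorem partners_splitForced_inl_right (hM : M m0 w0) (w : W) :
    {x | splitForced m0 w0 M x (.inl w)} = liftMan m0 w0 w '' {u | M u w} := by
  ext (u | _) <;> simp only [Set.mem_ofPred_eq, Set.mem_image, splitForced, liftMan] <;> grind

theorem partners_splitForced_inr_left (t : Unit) :
    {y | splitForced m0 w0 M (.inr t) y} = {.inl w0} := by
  ext (w | _) <;> simp [splitForced]

theorem partners_splitForced_inr_right (t : Unit) :
    {x | splitForced m0 w0 M x (.inr t)} = {.inl m0} := by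
  ext (u | _) <;> simp [splitForced]

theorem blocks_splitForced_inl_iff (hM : M m0 w0) (u : U) (w : W) :
    Blocks (forcedExt I m0 w0) (splitForced m0 w0 M) (.inl u) (.inl w) ↔ Blocks I M u w := by
  by_cases h : u = m0 ∧ w = w0
  · obtain ⟨rfl, rfl⟩ := h
    exact iff_of_false (fun hb => hb.1.2 ⟨rfl, rfl⟩) (fun hb => hb.2.1 hM)
  · rw [blocks_iff, blocks_iff, partners_splitForced_inl_left hM, partners_splitForced_inl_right hM,
      beatsPartner_image, beatsPartner_image, rU_comp_liftWoman, rW_comp_liftMan]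
    simp only [forcedExt, splitForced, h, not_false_eq_true, and_true]

theorem not_blocks_splitForced_inr_right (x : U ⊕ Unit) (t : Unit) :
    ¬ Blocks (forcedExt I m0 w0) (splitForced m0 w0 M) x (.inr t) := by
  rintro ⟨hadj, hnot, -⟩
  obtain (u | _) := x
  · exact hnot hadj
  · exact hadj

theorem not_blocks_splitForced_inr_left (t : Unit) (y : W ⊕ Unit) :
    ¬ Blocks (forcedExt I m0 w0) (splitForced m0 w0 M) (.inr t) y := by
  rintro ⟨hadj, hnot, -⟩
  obtain (w | _) := y
  · exact hnot hadj
  · exact hadj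

theorem isMatching_splitForced_iff (hadj : I.adj m0 w0) (hM : M m0 w0) :
    IsMatching (forcedExt I m0 w0) (splitForced m0 w0 M) ↔ IsMatching I M := by
  rw [isMatching_iff, isMatching_iff]
  refine and_congr ?_ (and_congr ?_ ?_)
  · simp only [Sum.forall, splitForced, forcedExt, imp_self, implies_true, and_true]
    refine ⟨fun h u w hm => ?_, fun h u w hm => ⟨h u w hm.1, hm.2⟩⟩
    by_cases e : u = m0 ∧ w = w0
    · obtain ⟨rfl, rfl⟩ := e; exact hadj
    · exact (h u w ⟨hm, e⟩).1
  · simp only [Sum.forall, partners_splitForced_inl_left hM, partners_splitForced_inr_left,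
      (liftWoman_injective _).subsingleton_image_iff, Set.subsingleton_singleton, implies_true,
      and_true]
  · simp only [Sum.forall, partners_splitForced_inl_right hM, partners_splitForced_inr_right,
      (liftMan_injective _).subsingleton_image_iff, Set.subsingleton_singleton, implies_true,
      and_true]

theorem isStable_splitForced_iff (hadj : I.adj m0 w0) (hM : M m0 w0) :
    IsStable (forcedExt I m0 w0) (splitForced m0 w0 M) ↔ IsStable I M := by
  refine and_congr (isMatching_splitForced_iff hadj hM) ?_
  simp only [Sum.forall, blocks_splitForced_inl_iff hM, not_blocks_splitForced_inr_right,
    not_blocks_splitForced_inr_left, not_false_eq_true, implies_true, and_true]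

theorem splitForced_mergeForced {M' : U ⊕ Unit → W ⊕ Unit → Prop}
    (hadj : ∀ x y, M' x y → (forcedExt I m0 w0).adj x y)
    (hws : ∃ x, M' x (.inr ())) (hmt : ∃ y, M' (.inr ()) y) :
    splitForced m0 w0 (mergeForced m0 w0 M') = M' := by
  have hws : M' (.inl m0) (.inr ()) := by
    obtain ⟨(u | _), hu⟩ := hws
    · obtain rfl : u = m0 := hadj _ _ hu
      exact hu
    · exact (hadj _ _ hu).elim
  have hmt : M' (.inr ()) (.inl w0) := by
    obtain ⟨(w | _), hw⟩ := hmt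
    · obtain rfl : w = w0 := hadj _ _ hw
      exact hw
    · exact (hadj _ _ hw).elim
  ext (u | ⟨⟩) (w | ⟨⟩)
  · exact ⟨fun ⟨h, e⟩ => h.resolve_right e, fun h => ⟨.inl h, (hadj _ _ h).2⟩⟩
  · exact ⟨by rintro rfl; exact hws, hadj _ _⟩
  · exact ⟨by rintro rfl; exact hmt, hadj _ _⟩
  · exact ⟨False.elim, hadj _ _⟩

end ForcedEdge

open ForcedEdge in
/-- `G` has a stable matching containing the forced edge `m₀w₀` iff `G'` has a
stable matching covering both new vertices `w_s` and `m_t`. -/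
theorem forced_edge_reduction {U W : Type} (I : SM U W) (m0 : U) (w0 : W)
    (hadj : I.adj m0 w0) :
    (∃ M : U → W → Prop, IsStable I M ∧ M m0 w0) ↔
    (∃ M' : (U ⊕ Unit) → (W ⊕ Unit) → Prop,
      IsStable (forcedExt I m0 w0) M' ∧
      (∃ u, M' u (Sum.inr ())) ∧ (∃ w, M' (Sum.inr ()) w)) := by
  constructor
  · rintro ⟨M, hM, h0⟩
    exact ⟨splitForced m0 w0 M, (isStable_splitForced_iff hadj h0).2 hM, ⟨.inl m0, rfl⟩,
      ⟨.inl w0, rfl⟩⟩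
  · rintro ⟨M', hM', hws, hmt⟩
    have h0 : mergeForced m0 w0 M' m0 w0 := .inr ⟨rfl, rfl⟩
    rw [← splitForced_mergeForced hM'.1.1 hws hmt] at hM'
    exact ⟨_, (isStable_splitForced_iff hadj h0).1 hM', h0⟩
end

section
/- Let G be a stable-marriage instance with a forbidden edge mw. Construct G_s from G by adding a new vertex s adjacent only to w, where the edge sw is ranked by w strictly better than mw but strictly worse than every edge w prefers to mw. If M_s is a stable matching of G_s in which w is not matched to s, then M_s restricted to G (which contains no edge incident to s) is a stable matching of G not containing mw. -/
/-- `G_s`: add a new man `s` adjacent only to `w₀`, whose rank at `w₀` is `ρ`. -/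
def addS {U W : Type} (I : SM U W) (w0 : W) (ρ : ℚ) : SM (U ⊕ Unit) W where
  adj x w :=
    match x with
    | Sum.inl u => I.adj u w
    | Sum.inr _ => w = w0
  rU x w :=
    match x with
    | Sum.inl u => I.rU u w
    | Sum.inr _ => 0
  rW w x :=
    match x with
    | Sum.inl u => I.rW w u
    | Sum.inr _ => ρ

/-! `s` can only ever be matched to `w₀`, so once it is unmatched there, a stable `M_s` must give `w₀`
a partner she ranks at least as well as `s`; since `s` beats `m₀`, that partner is not `m₀`. Every other
potential blocking edge of the restriction lies in `G` and would block `M_s` as well, `s` being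
unmatched. -/

section AddS

variable {U W : Type} {I : SM U W} {w0 : W} {ρ : ℚ} {Ms : (U ⊕ Unit) → W → Prop}

theorem addS_inr_unmatched (hM : IsMatching (addS I w0 ρ) Ms) (hs : ¬ Ms (Sum.inr ()) w0)
    (x : Unit) (w : W) : ¬ Ms (Sum.inr x) w := fun h =>
  hs ((hM.1 _ _ h : w = w0) ▸ h)

theorem IsMatching.restrict_inl (hM : IsMatching (addS I w0 ρ) Ms) :
    IsMatching I (fun m w => Ms (Sum.inl m) w) :=
  ⟨fun _ _ h => hM.1 _ _ h, fun _ _ _ h h' => hM.2.1 _ _ _ h h',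
    fun _ _ _ h h' => Sum.inl_injective (hM.2.2 _ _ _ h h')⟩

theorem blocks_addS_of_blocks_restrict (hsM : ∀ x w, ¬ Ms (Sum.inr x) w) {m : U} {w : W}
    (hb : Blocks I (fun m w => Ms (Sum.inl m) w) m w) : Blocks (addS I w0 ρ) Ms (Sum.inl m) w := by
  obtain ⟨hadj, hnot, hm, hw⟩ := hb
  refine ⟨hadj, hnot, hm, ?_⟩
  rcases hw with hfree | ⟨m', hm', hr⟩
  · exact Or.inl fun
      | Sum.inl u => hfree u
      | Sum.inr x => hsM x w
  · exact Or.inr ⟨Sum.inl m', hm', hr⟩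

theorem IsStable.restrict_inl (hMs : IsStable (addS I w0 ρ) Ms) (hs : ¬ Ms (Sum.inr ()) w0) :
    IsStable I (fun m w => Ms (Sum.inl m) w) :=
  ⟨IsMatching.restrict_inl hMs.1, fun _ _ hb =>
    hMs.2 _ _ (blocks_addS_of_blocks_restrict (addS_inr_unmatched hMs.1 hs) hb)⟩

/-- Otherwise the edge `s w₀` would block `M_s`. -/
theorem IsStable.exists_partner_rank_le (hMs : IsStable (addS I w0 ρ) Ms)
    (hs : ¬ Ms (Sum.inr ()) w0) : ∃ m', Ms (Sum.inl m') w0 ∧ I.rW w0 m' ≤ ρ := by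
  have hsM := addS_inr_unmatched hMs.1 hs
  have hnb := hMs.2 (Sum.inr ()) w0
  simp only [Blocks, not_and, not_or, not_exists, not_forall, not_not] at hnb
  obtain ⟨⟨x, hx⟩, hle⟩ := hnb rfl hs (Or.inl fun w' => hsM () w')
  rcases x with m' | x
  · exact ⟨m', hx, not_lt.mp (hle (Sum.inl m') hx)⟩
  · exact absurd hx (hsM x w0)

end AddS

theorem forbidden_edge_restriction_general {U W : Type} (I : SM U W)
    (m0 : U) (w0 : W) (ρ : ℚ)
    (hlt : ρ < I.rW w0 m0)
    (Ms : (U ⊕ Unit) → W → Prop)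
    (hMs : IsStable (addS I w0 ρ) Ms)
    (hs : ¬ Ms (Sum.inr ()) w0) :
    IsStable I (fun m w => Ms (Sum.inl m) w) ∧ ¬ Ms (Sum.inl m0) w0 := by
  refine ⟨hMs.restrict_inl hs, fun hm0 => ?_⟩
  obtain ⟨m', hm', hle⟩ := hMs.exists_partner_rank_le hs
  obtain rfl : m' = m0 := Sum.inl_injective (hMs.1.2.2 _ _ _ hm' hm0)
  exact hle.not_gt hlt

/-- Forbidden edge `m₀w₀`: if `sw₀` is ranked by `w₀` strictly better than
`m₀w₀` but strictly worse than every edge `w₀` prefers to `m₀w₀`, and `M_s` is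
a stable matching of `G_s` in which `w₀` is not matched to `s`, then the
restriction of `M_s` to `G` is a stable matching of `G` avoiding `m₀w₀`. -/
theorem forbidden_edge_restriction {U W : Type} (I : SM U W)
    (m0 : U) (w0 : W) (hadj : I.adj m0 w0) (ρ : ℚ)
    (hlt : ρ < I.rW w0 m0)
    (hgt : ∀ m', I.adj m' w0 → I.rW w0 m' < I.rW w0 m0 → I.rW w0 m' < ρ)
    (Ms : (U ⊕ Unit) → W → Prop)
    (hMs : IsStable (addS I w0 ρ) Ms)
    (hs : ¬ Ms (Sum.inr ()) w0) :
    IsStable I (fun m w => Ms (Sum.inl m) w) ∧ ¬ Ms (Sum.inl m0) w0 :=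
  forbidden_edge_restriction_general I m0 w0 ρ hlt Ms hMs hs
end

section
/- Rural hospitals theorem for stable matchings: in a bipartite stable-marriage instance with strict preferences, every vertex that is unmatched in some stable matching is unmatched in every stable matching; consequently all stable matchings have the same cardinality and match the same set of vertices. -/
section Counting

variable {α β : Type*} {R : α → β → Prop}

theorem Relator.RightUnique.ncard_graph_eq_ncard_dom (hR : Relator.RightUnique R) :
    {p : α × β | R p.1 p.2}.ncard = {a | ∃ b, R a b}.ncard := by
  have himage : Prod.fst '' {p : α × β | R p.1 p.2} = {a | ∃ b, R a b} := by
    ext a; simp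
  rw [← himage, Set.InjOn.ncard_image]
  rintro ⟨a, b⟩ hab ⟨a', b'⟩ hab' (rfl : a = a')
  exact Prod.ext rfl (hR hab hab')

theorem Relator.LeftUnique.ncard_graph_eq_ncard_codom (hR : Relator.LeftUnique R) :
    {p : α × β | R p.1 p.2}.ncard = {b | ∃ a, R a b}.ncard := by
  have himage : Prod.snd '' {p : α × β | R p.1 p.2} = {b | ∃ a, R a b} := by
    ext b; simp
  rw [← himage, Set.InjOn.ncard_image]
  rintro ⟨a, b⟩ hab ⟨a', b'⟩ hab' (rfl : b = b')
  exact Prod.ext (hR hab hab') rfl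

theorem Relator.BiUnique.ncard_dom_eq_ncard_codom (hR : Relator.BiUnique R) :
    {a | ∃ b, R a b}.ncard = {b | ∃ a, R a b}.ncard := by
  rw [← hR.2.ncard_graph_eq_ncard_dom, hR.1.ncard_graph_eq_ncard_codom]

theorem Set.eq_and_eq_of_ncard_union_le_ncard_inter [Finite α] [Finite β]
    {A A' : Set α} {B B' : Set β} (h : (A ∪ A').ncard ≤ (B ∩ B').ncard)
    (hA : A.ncard = B.ncard) (hA' : A'.ncard = B'.ncard) : A = A' ∧ B = B' := by
  have h₁ := Set.ncard_le_ncard (Set.subset_union_left : A ⊆ A ∪ A')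
  have h₂ := Set.ncard_le_ncard (Set.subset_union_right : A' ⊆ A ∪ A')
  have h₃ := Set.ncard_le_ncard (Set.inter_subset_left : B ∩ B' ⊆ B)
  have h₄ := Set.ncard_le_ncard (Set.inter_subset_right : B ∩ B' ⊆ B')
  have hAu : A = A ∪ A' := Set.eq_of_subset_of_ncard_le Set.subset_union_left (by omega)
  have hA'u : A' = A ∪ A' := Set.eq_of_subset_of_ncard_le Set.subset_union_right (by omega)
  have hBi : B ∩ B' = B := Set.eq_of_subset_of_ncard_le Set.inter_subset_left (by omega)
  have hB'i : B ∩ B' = B' := Set.eq_of_subset_of_ncard_le Set.inter_subset_right (by omega)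
  exact ⟨hAu.trans hA'u.symm, hBi.symm.trans hB'i⟩

end Counting

section StableMatching

variable {U W : Type} {I : SM U W} {M M' : U → W → Prop} {m m' : U} {w w' : W}

theorem IsMatching.adj (hM : IsMatching I M) (h : M m w) : I.adj m w :=
  hM.1 m w h

theorem IsMatching.biUnique (hM : IsMatching I M) : Relator.BiUnique M :=
  ⟨fun m m' w => hM.2.2 m m' w, fun m w w' => hM.2.1 m w w'⟩

theorem StrictPrefs.eq_of_rU_eq (hstrict : StrictPrefs I) (hw : I.adj m w) (hw' : I.adj m w')
    (h : I.rU m w = I.rU m w') : w = w' :=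
  hstrict.1 m w w' hw hw' h

theorem StrictPrefs.eq_of_rW_eq (hstrict : StrictPrefs I) (hm : I.adj m w) (hm' : I.adj m' w)
    (h : I.rW w m = I.rW w m') : m = m' :=
  hstrict.2 w m m' hm hm' h

theorem IsMatching.unmatched_or_prefers (hstrict : StrictPrefs I) (hM : IsMatching I M)
    (hw : I.adj m w) (hnot : ¬ M m w) (hle : ∀ w', M m w' → I.rU m w ≤ I.rU m w') :
    (∀ w', ¬ M m w') ∨ ∃ w', M m w' ∧ I.rU m w < I.rU m w' := by
  by_cases hmatched : ∃ w', M m w'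
  · obtain ⟨w', hw'⟩ := hmatched
    refine Or.inr ⟨w', hw', (hle w' hw').lt_of_ne fun he => hnot ?_⟩
    rwa [hstrict.eq_of_rU_eq hw (hM.adj hw') he]
  · exact Or.inl (not_exists.mp hmatched)

theorem IsStable.rW_le_of_rU_le (hstrict : StrictPrefs I) (hM : IsStable I M) (hMw : M m w)
    (hw : I.adj m' w) (hne : m' ≠ m) (hle : ∀ w', M m' w' → I.rU m' w ≤ I.rU m' w') :
    I.rW w m ≤ I.rW w m' := by
  have hnot : ¬ M m' w := fun h => hne (hM.1.biUnique.1 h hMw)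
  exact not_lt.mp fun hlt =>
    hM.2 m' w ⟨hw, hnot, hM.1.unmatched_or_prefers hstrict hw hnot hle, Or.inr ⟨m, hMw, hlt⟩⟩

theorem IsStable.exists_partner_of_rU_le (hstrict : StrictPrefs I) (hM : IsStable I M)
    (hw : I.adj m w) (hle : ∀ w', M m w' → I.rU m w ≤ I.rU m w') : ∃ m', M m' w := by
  by_contra! hfree
  exact hM.2 m w ⟨hw, hfree m, hM.1.unmatched_or_prefers hstrict hw (hfree m) hle, Or.inl hfree⟩

/-- In the lattice of stable matchings this is the join of `M` and `M'`. -/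
def menJoin (I : SM U W) (M M' : U → W → Prop) (m : U) (w : W) : Prop :=
  (M m w ∨ M' m w) ∧ ∀ w', (M m w' ∨ M' m w') → I.rU m w ≤ I.rU m w'

theorem menJoin.adj (hM : IsMatching I M) (hM' : IsMatching I M') (h : menJoin I M M' m w) :
    I.adj m w :=
  h.1.elim hM.adj hM'.adj

theorem exists_menJoin_iff [Finite W] :
    (∃ w, menJoin I M M' m w) ↔ (∃ w, M m w) ∨ ∃ w, M' m w := by
  refine ⟨fun ⟨w, h⟩ => h.1.imp (⟨w, ·⟩) (⟨w, ·⟩), fun hm => ?_⟩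
  have hne : {w | M m w ∨ M' m w}.Nonempty :=
    hm.elim (fun ⟨w, h⟩ => ⟨w, Or.inl h⟩) fun ⟨w, h⟩ => ⟨w, Or.inr h⟩
  obtain ⟨w, hw, hmin⟩ := Set.exists_min_image _ (I.rU m) (Set.toFinite _) hne
  exact ⟨w, hw, hmin⟩

theorem menJoin.exists_partners (hstrict : StrictPrefs I) (hM : IsStable I M)
    (hM' : IsStable I M') (h : menJoin I M M' m w) : (∃ m', M m' w) ∧ ∃ m', M' m' w := by
  have hw := h.adj hM.1 hM'.1
  exact ⟨hM.exists_partner_of_rU_le hstrict hw fun w' hw' => h.2 w' (Or.inl hw'),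
    hM'.exists_partner_of_rU_le hstrict hw fun w' hw' => h.2 w' (Or.inr hw')⟩

/-- Each of `m`, `m'` likes `w` at least as much as his partner in the other matching,
so by stability `w` ranks each of them at least as high as the other. -/
theorem menJoin.eq_of_left_of_right (hstrict : StrictPrefs I) (hM : IsStable I M)
    (hM' : IsStable I M') (h : menJoin I M M' m w) (h' : menJoin I M M' m' w)
    (hm : M m w) (hm' : M' m' w) : m = m' := by
  by_contra hne
  have hle : I.rW w m ≤ I.rW w m' :=
    hM.rW_le_of_rU_le hstrict hm (hM'.1.adj hm') (Ne.symm hne) fun w' hw' => h'.2 w' (Or.inl hw')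
  have hge : I.rW w m' ≤ I.rW w m :=
    hM'.rW_le_of_rU_le hstrict hm' (hM.1.adj hm) hne fun w' hw' => h.2 w' (Or.inr hw')
  exact hne (hstrict.eq_of_rW_eq (hM.1.adj hm) (hM'.1.adj hm') (le_antisymm hle hge))

theorem biUnique_menJoin (hstrict : StrictPrefs I) (hM : IsStable I M) (hM' : IsStable I M') :
    Relator.BiUnique (menJoin I M M') := by
  refine ⟨fun m m' w h h' => ?_, fun m w w' h h' => ?_⟩
  · rcases h.1 with hm | hm <;> rcases h'.1 with hm' | hm'
    · exact hM.1.biUnique.1 hm hm'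
    · exact h.eq_of_left_of_right hstrict hM hM' h' hm hm'
    · exact (h'.eq_of_left_of_right hstrict hM hM' h hm' hm).symm
    · exact hM'.1.biUnique.1 hm hm'
  · exact hstrict.eq_of_rU_eq (h.adj hM.1 hM'.1) (h'.adj hM.1 hM'.1)
      (le_antisymm (h.2 w' h'.1) (h'.2 w h.1))

end StableMatching

/-- Rural hospitals theorem: every vertex unmatched in some stable matching is
unmatched in every stable matching; hence all stable matchings match the same
set of vertices and have the same cardinality. -/
theorem rural_hospitals {U W : Type} [Finite U] [Finite W]
    (I : SM U W) (hstrict : StrictPrefs I)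
    (M M' : U → W → Prop) (hM : IsStable I M) (hM' : IsStable I M') :
    (∀ m : U, (∃ w, M m w) ↔ (∃ w, M' m w)) ∧
    (∀ w : W, (∃ m, M m w) ↔ (∃ m, M' m w)) ∧
    {p : U × W | M p.1 p.2}.ncard = {p : U × W | M' p.1 p.2}.ncard := by
  have hcard : ({m | ∃ w, M m w} ∪ {m | ∃ w, M' m w}).ncard ≤
      ({w | ∃ m, M m w} ∩ {w | ∃ m, M' m w}).ncard :=
    calc _ = {m | ∃ w, menJoin I M M' m w}.ncard := by
          congr 1; ext m; exact exists_menJoin_iff.symm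
      _ = {w | ∃ m, menJoin I M M' m w}.ncard :=
          (biUnique_menJoin hstrict hM hM').ncard_dom_eq_ncard_codom
      _ ≤ _ := Set.ncard_le_ncard fun w ⟨m, h⟩ => h.exists_partners hstrict hM hM'
  obtain ⟨hmen, hwomen⟩ := Set.eq_and_eq_of_ncard_union_le_ncard_inter hcard
    hM.1.biUnique.ncard_dom_eq_ncard_codom hM'.1.biUnique.ncard_dom_eq_ncard_codom
  refine ⟨fun m => Set.ext_iff.mp hmen m, fun w => Set.ext_iff.mp hwomen w, ?_⟩
  rw [hM.1.biUnique.2.ncard_graph_eq_ncard_dom, hM'.1.biUnique.2.ncard_graph_eq_ncard_dom, hmen]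
end

section
/- Forced-edge reduction for stable flows: let (D,c,O) be a stable flow instance with a completely forced edge uv (required f(uv) = c(uv)). Form D_st by deleting uv and adding new terminal vertices s, t with edges sv and ut of capacity c(uv), where sv takes uv's rank in v's list and ut takes uv's rank in u's list. Then D admits a stable flow f with f(uv) = c(uv) if and only if D_st admits a stable flow f_st with f_st(sv) = f_st(ut) = c(uv). -/
/-- A flow network: directed edges `E` over vertices `V`, capacities, a set `S`
of terminals, and for each vertex a rank of its incident edges
(lower rank = more preferred). -/
structure FlowNet (V E : Type) where
  src : E → V
  dst : E → V
  cap : E → ℚ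
  S : Set V
  rk : V → E → ℚ

variable {V E : Type}

/-- Total flow leaving `v`. -/
def outflow [Fintype E] [DecidableEq V] (N : FlowNet V E) (f : E → ℚ) (v : V) : ℚ :=
  ∑ e : E, if N.src e = v then f e else 0

/-- Total flow entering `v`. -/
def inflow [Fintype E] [DecidableEq V] (N : FlowNet V E) (f : E → ℚ) (v : V) : ℚ :=
  ∑ e : E, if N.dst e = v then f e else 0

/-- Feasible flow: capacity constraints, and conservation at non-terminals. -/
def Feasible [Fintype E] [DecidableEq V] (N : FlowNet V E) (f : E → ℚ) : Prop :=
  (∀ e, 0 ≤ f e ∧ f e ≤ N.cap e) ∧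
  (∀ v, v ∉ N.S → outflow N f v = inflow N f v)

/-- A (nonempty) directed walk, given as the list of its edges. -/
def IsWalk (N : FlowNet V E) (l : List E) : Prop :=
  l ≠ [] ∧ l.Chain' (fun e e' => N.dst e = N.src e')

/-- The first edge `e` of a walk dominates `f` at its start: the start vertex is
a terminal, or some outgoing edge worse than `e` carries positive flow. -/
def DomAtStart (N : FlowNet V E) (f : E → ℚ) (e : E) : Prop :=
  N.src e ∈ N.S ∨
    ∃ e', N.src e' = N.src e ∧ 0 < f e' ∧ N.rk (N.src e) e < N.rk (N.src e) e'

/-- The last edge `e` of a walk dominates `f` at its end: the end vertex is a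
terminal, or some incoming edge worse than `e` carries positive flow. -/
def DomAtEnd (N : FlowNet V E) (f : E → ℚ) (e : E) : Prop :=
  N.dst e ∈ N.S ∨
    ∃ e', N.dst e' = N.dst e ∧ 0 < f e' ∧ N.rk (N.dst e) e < N.rk (N.dst e) e'

/-- A blocking walk: a directed walk of unsaturated edges dominating `f` at both ends. -/
def IsBlockingWalk (N : FlowNet V E) (f : E → ℚ) (l : List E) : Prop :=
  IsWalk N l ∧ (∀ e ∈ l, f e < N.cap e) ∧
  ∃ h : l ≠ [], DomAtStart N f (l.head h) ∧ DomAtEnd N f (l.getLast h)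

/-- A stable flow: a feasible flow admitting no blocking walk. -/
def IsStableFlow [Fintype E] [DecidableEq V] (N : FlowNet V E) (f : E → ℚ) : Prop :=
  Feasible N f ∧ ∀ l : List E, ¬ IsBlockingWalk N f l

/-- The forced-edge construction `D_st`: delete the forced edge `e0 = uv` and
add new terminals `s = inr false` and `t = inr true`, with edges
`sv = inr false` and `ut = inr true` of capacity `cap e0`, taking over `e0`'s
rank at `v` resp. `u`. -/
def forcedNet [DecidableEq E] (N : FlowNet V E) (e0 : E) :
    FlowNet (V ⊕ Bool) ({e : E // e ≠ e0} ⊕ Bool) where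
  src x := match x with
    | Sum.inl e => Sum.inl (N.src e.1)
    | Sum.inr false => Sum.inr false          -- sv starts at the new terminal s
    | Sum.inr true => Sum.inl (N.src e0)      -- ut starts at u
  dst x := match x with
    | Sum.inl e => Sum.inl (N.dst e.1)
    | Sum.inr false => Sum.inl (N.dst e0)     -- sv ends at v
    | Sum.inr true => Sum.inr true            -- ut ends at the new terminal t
  cap x := match x with
    | Sum.inl e => N.cap e.1
    | Sum.inr _ => N.cap e0
  S := (Sum.inl '' N.S) ∪ {Sum.inr false, Sum.inr true}
  rk x y := match x, y with
    | Sum.inl v, Sum.inl e => N.rk v e.1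
    | Sum.inl v, Sum.inr _ => N.rk v e0       -- sv and ut take over e0's rank
    | Sum.inr _, _ => 0
/-!
Under a flow saturating `uv`, none of `uv`, `sv`, `ut` lies on a blocking walk, and at `u` and `v`
the edges `ut` and `sv` carry the same flow and rank as `uv`. Hence a flow `f` on `D` with
`f(uv) = c(uv)` and the flow on `D_st` that copies `f` and puts `c(uv)` on `sv` and `ut` are
simultaneously feasible (the balances at `u` and `v` are unchanged) and simultaneously stable
(blocking walks of the two correspond edge by edge).
-/

section Transfer

variable {V₁ E₁ V₂ E₂ : Type} {N₁ : FlowNet V₁ E₁} {N₂ : FlowNet V₂ E₂}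
  {f₁ : E₁ → ℚ} {f₂ : E₂ → ℚ}

theorem IsBlockingWalk.map (ι : E₁ → E₂)
    (hlink : ∀ e e', f₁ e < N₁.cap e → f₁ e' < N₁.cap e' →
      N₁.dst e = N₁.src e' → N₂.dst (ι e) = N₂.src (ι e'))
    (hunsat : ∀ e, f₁ e < N₁.cap e → f₂ (ι e) < N₂.cap (ι e))
    (hstart : ∀ e, f₁ e < N₁.cap e → DomAtStart N₁ f₁ e → DomAtStart N₂ f₂ (ι e))
    (hend : ∀ e, f₁ e < N₁.cap e → DomAtEnd N₁ f₁ e → DomAtEnd N₂ f₂ (ι e))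
    {l : List E₁} (hl : IsBlockingWalk N₁ f₁ l) : IsBlockingWalk N₂ f₂ (l.map ι) := by
  obtain ⟨⟨hne, hchain⟩, hlt, _, hs, he⟩ := hl
  have hne' : l.map ι ≠ [] := by simpa using hne
  refine ⟨⟨hne', ?_⟩, ?_, hne', ?_, ?_⟩
  · exact (List.isChain_map ι).2 <| List.IsChain.imp_of_mem_imp
      (fun a b ha hb hab => hlink a b (hlt a ha) (hlt b hb) hab) hchain
  · simpa using fun e he => hunsat e (hlt e he)
  · rw [List.head_map]
    exact hstart _ (hlt _ (List.head_mem hne)) hs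
  · rw [List.getLast_map]
    exact hend _ (hlt _ (List.getLast_mem hne)) he

end Transfer

def forcedFlow (e0 : E) (f : E → ℚ) : {e : E // e ≠ e0} ⊕ Bool → ℚ :=
  Sum.elim (fun e => f e.1) (fun _ => f e0)

variable [DecidableEq E] (N : FlowNet V E) (e0 : E)

theorem exists_forcedFlow_eq (f' : {e : E // e ≠ e0} ⊕ Bool → ℚ)
    (h : f' (Sum.inr false) = f' (Sum.inr true)) : ∃ f : E → ℚ, forcedFlow e0 f = f' := by
  refine ⟨fun e => if he : e = e0 then f' (Sum.inr true) else f' (Sum.inl ⟨e, he⟩), ?_⟩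
  ext (e | b)
  · simp [forcedFlow, e.2]
  · cases b <;> simp [forcedFlow, h]

variable {N e0}

theorem domAtStart_forcedNet_iff {f : E → ℚ} {e : {e : E // e ≠ e0}} :
    DomAtStart (forcedNet N e0) (forcedFlow e0 f) (Sum.inl e) ↔ DomAtStart N f e.1 := by
  constructor
  · rintro (h | ⟨(e' | _ | _), he', hpos, hrk⟩)
    · exact Or.inl (by simpa [forcedNet] using h)
    · exact Or.inr ⟨e'.1, by simpa [forcedNet] using he', hpos, hrk⟩
    · simp [forcedNet] at he'
    · exact Or.inr ⟨e0, by simpa [forcedNet] using he', hpos, hrk⟩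
  · rintro (h | ⟨e', he', hpos, hrk⟩)
    · exact Or.inl (by simpa [forcedNet] using h)
    · by_cases h0 : e' = e0
      · subst h0
        exact Or.inr ⟨Sum.inr true, by simpa [forcedNet] using he', hpos, hrk⟩
      · exact Or.inr ⟨Sum.inl ⟨e', h0⟩, by simpa [forcedNet] using he', hpos, hrk⟩

theorem domAtEnd_forcedNet_iff {f : E → ℚ} {e : {e : E // e ≠ e0}} :
    DomAtEnd (forcedNet N e0) (forcedFlow e0 f) (Sum.inl e) ↔ DomAtEnd N f e.1 := by
  constructor
  · rintro (h | ⟨(e' | _ | _), he', hpos, hrk⟩)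
    · exact Or.inl (by simpa [forcedNet] using h)
    · exact Or.inr ⟨e'.1, by simpa [forcedNet] using he', hpos, hrk⟩
    · exact Or.inr ⟨e0, by simpa [forcedNet] using he', hpos, hrk⟩
    · simp [forcedNet] at he'
  · rintro (h | ⟨e', he', hpos, hrk⟩)
    · exact Or.inl (by simpa [forcedNet] using h)
    · by_cases h0 : e' = e0
      · subst h0
        exact Or.inr ⟨Sum.inr false, by simpa [forcedNet] using he', hpos, hrk⟩
      · exact Or.inr ⟨Sum.inl ⟨e', h0⟩, by simpa [forcedNet] using he', hpos, hrk⟩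

theorem IsBlockingWalk.exists_forcedNet {f : E → ℚ} (hf : f e0 = N.cap e0) {l : List E}
    (hl : IsBlockingWalk N f l) : ∃ l', IsBlockingWalk (forcedNet N e0) (forcedFlow e0 f) l' := by
  have hne : ∀ e, f e < N.cap e → e ≠ e0 := by
    rintro e hlt rfl
    exact hlt.ne hf
  -- `e0` is saturated, so where it is sent does not matter
  refine ⟨_, hl.map (fun e => if he : e = e0 then Sum.inr true else Sum.inl ⟨e, he⟩)
    ?_ ?_ ?_ ?_⟩
  · intro e e' he he' hee'
    simp [hne e he, hne e' he', forcedNet, hee']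
  · intro e he
    simpa [hne e he, forcedNet, forcedFlow] using he
  · intro e he hs
    simpa [hne e he] using (domAtStart_forcedNet_iff (e := ⟨e, hne e he⟩)).2 hs
  · intro e he hs
    simpa [hne e he] using (domAtEnd_forcedNet_iff (e := ⟨e, hne e he⟩)).2 hs

theorem IsBlockingWalk.exists_of_forcedNet {f : E → ℚ} (hf : f e0 = N.cap e0)
    {l : List ({e : E // e ≠ e0} ⊕ Bool)}
    (hl : IsBlockingWalk (forcedNet N e0) (forcedFlow e0 f) l) : ∃ l', IsBlockingWalk N f l' := by
  have hinl : ∀ x, forcedFlow e0 f x < (forcedNet N e0).cap x → ∃ e, x = Sum.inl e := by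
    rintro (e | b) hlt
    · exact ⟨e, rfl⟩
    · simp [forcedFlow, forcedNet, hf] at hlt
  refine ⟨_, hl.map (Sum.elim Subtype.val fun _ => e0) ?_ ?_ ?_ ?_⟩
  · intro x x' hx hx' hxx'
    obtain ⟨e, rfl⟩ := hinl x hx
    obtain ⟨e', rfl⟩ := hinl x' hx'
    simpa [forcedNet] using hxx'
  · intro x hx
    obtain ⟨e, rfl⟩ := hinl x hx
    exact hx
  · intro x hx hs
    obtain ⟨e, rfl⟩ := hinl x hx
    exact domAtStart_forcedNet_iff.1 hs
  · intro x hx hs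
    obtain ⟨e, rfl⟩ := hinl x hx
    exact domAtEnd_forcedNet_iff.1 hs

section Stability

variable [Fintype E] [DecidableEq V]

theorem outflow_forcedNet_inl (f : E → ℚ) (v : V) :
    outflow (forcedNet N e0) (forcedFlow e0 f) (Sum.inl v) = outflow N f v := by
  simp [outflow, Fintype.sum_sum_type, Fintype.sum_eq_add_sum_subtype_ne _ e0, forcedNet,
    forcedFlow, add_comm]

theorem inflow_forcedNet_inl (f : E → ℚ) (v : V) :
    inflow (forcedNet N e0) (forcedFlow e0 f) (Sum.inl v) = inflow N f v := by
  simp [inflow, Fintype.sum_sum_type, Fintype.sum_eq_add_sum_subtype_ne _ e0, forcedNet,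
    forcedFlow, add_comm]

theorem feasible_forcedNet_iff {f : E → ℚ} :
    Feasible (forcedNet N e0) (forcedFlow e0 f) ↔ Feasible N f := by
  refine and_congr ⟨fun h e => ?_, fun h => ?_⟩ ⟨fun h v hv => ?_, fun h => ?_⟩
  · by_cases he : e = e0
    · subst he
      exact h (Sum.inr true)
    · exact h (Sum.inl ⟨e, he⟩)
  · rintro (e | b)
    exacts [h e.1, h e0]
  · rw [← outflow_forcedNet_inl, ← inflow_forcedNet_inl]
    exact h (Sum.inl v) (by simpa [forcedNet] using hv)
  · rintro (v | b) hv
    · rw [outflow_forcedNet_inl, inflow_forcedNet_inl]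
      exact h v (by simpa [forcedNet] using hv)
    · cases b <;> simp [forcedNet] at hv

theorem isStableFlow_forcedNet_iff {f : E → ℚ} (hf : f e0 = N.cap e0) :
    IsStableFlow (forcedNet N e0) (forcedFlow e0 f) ↔ IsStableFlow N f := by
  refine and_congr feasible_forcedNet_iff ⟨fun h l hl => ?_, fun h l hl => ?_⟩
  · exact (hl.exists_forcedNet hf).elim h
  · exact (hl.exists_of_forcedNet hf).elim h

end Stability

/-- Forced-edge reduction for stable flows: `D` admits a stable flow saturating
the forced edge `uv` iff `D_st` admits a stable flow saturating both `sv` and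
`ut`. -/
theorem forced_edge_flow_reduction {V E : Type}
    [Fintype E] [DecidableEq E] [DecidableEq V]
    (N : FlowNet V E) (e0 : E) :
    (∃ f : E → ℚ, IsStableFlow N f ∧ f e0 = N.cap e0) ↔
    (∃ f' : ({e : E // e ≠ e0} ⊕ Bool) → ℚ,
      IsStableFlow (forcedNet N e0) f' ∧
      f' (Sum.inr false) = N.cap e0 ∧ f' (Sum.inr true) = N.cap e0) := by
  constructor
  · rintro ⟨f, hstable, hsat⟩
    exact ⟨forcedFlow e0 f, (isStableFlow_forcedNet_iff hsat).2 hstable, hsat, hsat⟩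
  · rintro ⟨f', hstable, hsat_sv, hsat_ut⟩
    obtain ⟨f, rfl⟩ := exists_forcedFlow_eq e0 f' (hsat_sv.trans hsat_ut.symm)
    exact ⟨f, (isStableFlow_forcedNet_iff hsat_ut).1 hstable, hsat_ut⟩
end

section
/- There exists a stable marriage instance with a set of free edges that admits two stable matchings of different cardinalities; that is, stable matchings with free edges need not all have the same cardinality. -/
/-- Stability with free edges: free edges may be used but never block. -/
def IsStableFree {U W : Type} (I : SM U W) (free : Set (U × W))
    (M : U → W → Prop) : Prop :=
  IsMatching I M ∧ ∀ m w, (m, w) ∉ free → ¬ Blocks I M m w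

/-- With free edges, stable matchings need not all have the same cardinality:
there is an instance (with strict preferences) and a set of free edges
admitting two stable matchings of different sizes. -/
theorem free_edges_different_cardinalities :
    ∃ (U W : Type) (I : SM U W) (free : Set (U × W))
      (M₁ M₂ : U → W → Prop),
      StrictPrefs I ∧
      IsStableFree I free M₁ ∧ IsStableFree I free M₂ ∧
      {p : U × W | M₁ p.1 p.2}.ncard ≠ {p : U × W | M₂ p.1 p.2}.ncard := by
  refine ⟨Bool, Bool,
    ⟨fun u w => u = true ∨ w = false,
     fun _ w => if w then 0 else 1,
     fun _ u => if u then 0 else 1⟩,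
    {(false, false)},
    fun u w => u = w,
    fun u w => u = true ∧ w = true, ?_, ?_, ?_, ?_⟩
  · constructor
    · rintro m w w' _ _ h
      revert h; cases w <;> cases w' <;> simp
    · rintro w m m' _ _ h
      revert h; cases m <;> cases m' <;> simp
  · refine ⟨⟨?_, ?_, ?_⟩, ?_⟩
    · rintro m w rfl; cases m <;> simp
    · rintro m w w' rfl rfl; rfl
    · rintro m m' w rfl rfl; rfl
    · rintro m w hfree ⟨hadj, hnM, hm, hw⟩
      cases m <;> cases w
      · exact hfree rfl
      · rcases hw with h | ⟨m', hm', hlt⟩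
        · exact h true rfl
        · rcases hm' with rfl; norm_num at hlt
      · rcases hm with h | ⟨w', hw', hlt⟩
        · exact h true rfl
        · rcases hw' with rfl; norm_num at hlt
      · exact hnM rfl
  · refine ⟨⟨?_, ?_, ?_⟩, ?_⟩
    · rintro m w ⟨rfl, rfl⟩; simp
    · rintro m w w' ⟨h1, h2⟩ ⟨h3, h4⟩; rw [h2, h4]
    · rintro m m' w ⟨h1, h2⟩ ⟨h3, h4⟩; rw [h1, h3]
    · rintro m w hfree ⟨hadj, hnM, hm, hw⟩
      cases m <;> cases w
      · exact hfree rfl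
      · rcases hadj with h | h <;> simp at h
      · rcases hm with h | ⟨w', ⟨_, rfl⟩, hlt⟩
        · exact h true ⟨rfl, rfl⟩
        · norm_num at hlt
      · exact hnM ⟨rfl, rfl⟩
  · have h1 : {p : Bool × Bool | p.1 = p.2} = {(true, true), (false, false)} := by
      ext ⟨a, b⟩; cases a <;> cases b <;> simp
    have h2 : {p : Bool × Bool | p.1 = true ∧ p.2 = true} = {((true : Bool), (true : Bool))} := by
      ext ⟨a, b⟩; cases a <;> cases b <;> simp
    rw [h1, h2, Set.ncard_pair (by simp), Set.ncard_singleton]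
    simp
end
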